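/- Let X, X_1, X_2, ... be i.i.d. real-valued random variables with mean μ and variance σ², 0 < σ² < +∞, and fix the sample size n ≥ 2. For each m, let (w_1^{(n)}, ..., w_n^{(n)}) be multinomial(m; 1/n, ..., 1/n) weights independent of the X_i's. Then, as m → +∞ with n fixed, the randomized sample variance S²_{m,n} converges to the sample variance S_n² in probability-P_{X,w}; that is, for every ε > 0, P_{X,w}( |S²_{m,n} − S_n²| > ε ) → 0 as m → ∞. -/

import Mathlib

open MeasureTheory ProbabilityTheory Filter

/-- The standard normal distribution function Φ. -/
noncomputable def Phi (t : ℝ) : ℝ := ((gaussianReal 0 1) (Set.Iic t)).toReal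

/-- `(w 1, …, w n)` has the multinomial distribution of size `m` with equal
probabilities `1/n` under `Pw`. -/
def IsUnifMultinomial {Ωw : Type} [MeasurableSpace Ωw] (Pw : Measure Ωw)
    (n m : ℕ) (w : Fin n → Ωw → ℕ) : Prop :=
  (∀ i, Measurable (w i)) ∧
  ∀ k : Fin n → ℕ,
    (Pw {ω | ∀ i, w i ω = k i}).toReal =
      if ∑ i, k i = m then
        (Nat.factorial m : ℝ) / (∏ i, (Nat.factorial (k i) : ℝ)) * (1 / n) ^ m
      else 0

/-- Sample mean X̄_n. -/
noncomputable def sampleMean {Ωx : Type} (X : ℕ → Ωx → ℝ) (n : ℕ) (ωx : Ωx) : ℝ :=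
  (∑ i : Fin n, X i ωx) / n

/-- Sample variance S_n². -/
noncomputable def sampleVar {Ωx : Type} (X : ℕ → Ωx → ℝ) (n : ℕ) (ωx : Ωx) : ℝ :=
  (∑ i : Fin n, (X i ωx - sampleMean X n ωx) ^ 2) / n

/-- Randomized sample mean X̄_{m,n}, for a realization `k` of the multinomial weights. -/
noncomputable def randMean {Ωx : Type} (X : ℕ → Ωx → ℝ) (n m : ℕ)
    (k : Fin n → ℕ) (ωx : Ωx) : ℝ :=
  (∑ i : Fin n, (k i : ℝ) * X i ωx) / m

/-- Randomized sample variance S²_{m,n}. -/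
noncomputable def randVar {Ωx : Type} (X : ℕ → Ωx → ℝ) (n m : ℕ)
    (k : Fin n → ℕ) (ωx : Ωx) : ℝ :=
  (∑ i : Fin n, (k i : ℝ) * (X i ωx - randMean X n m k ωx) ^ 2) / m

/-- √(Σ_j (k_j/m − 1/n)²). -/
noncomputable def weightNorm (n m : ℕ) (k : Fin n → ℕ) : ℝ :=
  Real.sqrt (∑ j : Fin n, ((k j : ℝ) / m - 1 / n) ^ 2)

/-- The randomized pivot G^{(1)}_{m,n} (given the weight realization `k`). -/
noncomputable def G1 {Ωx : Type} (X : ℕ → Ωx → ℝ) (μ : ℝ) (n m : ℕ)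
    (k : Fin n → ℕ) (ωx : Ωx) : ℝ :=
  (∑ i : Fin n, |(k i : ℝ) / m - 1 / n| * (X i ωx - μ)) /
    (Real.sqrt (sampleVar X n ωx) * weightNorm n m k)

/-- The randomized pivot T^{(1)}_{m,n}. -/
noncomputable def T1 {Ωx : Type} (X : ℕ → Ωx → ℝ) (n m : ℕ)
    (k : Fin n → ℕ) (ωx : Ωx) : ℝ :=
  (∑ i : Fin n, ((k i : ℝ) / m - 1 / n) * X i ωx) /
    (Real.sqrt (sampleVar X n ωx) * weightNorm n m k)

/-- The randomized pivot G^{(2)}_{m,n}. -/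
noncomputable def G2 {Ωx : Type} (X : ℕ → Ωx → ℝ) (μ : ℝ) (n m : ℕ)
    (k : Fin n → ℕ) (ωx : Ωx) : ℝ :=
  (∑ i : Fin n, |(k i : ℝ) / m - 1 / n| * (X i ωx - μ)) /
    (Real.sqrt (randVar X n m k ωx) * weightNorm n m k)

/-- The randomized pivot T^{(2)}_{m,n}. -/
noncomputable def T2 {Ωx : Type} (X : ℕ → Ωx → ℝ) (n m : ℕ)
    (k : Fin n → ℕ) (ωx : Ωx) : ℝ :=
  (∑ i : Fin n, ((k i : ℝ) / m - 1 / n) * X i ωx) /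
    (Real.sqrt (randVar X n m k ωx) * weightNorm n m k)

/-!
For weights `k` summing to `m`, both `S²_{m,n}` and `S_n²` are variances of the sample
`X_1, …, X_n` under a probability vector (`k_i / m`, resp. `1 / n`), and moving the probability
vector by at most `δ` in each coordinate moves the variance by at most `3 δ (∑ |X_i|)²`.
The multinomial weights concentrate around the uniform vector:
`E ∑_i (w_i / m - 1 / n)² = (n - 1) / (n m)`, so by Chebyshev their distance to it tends to `0`
in probability. Since `∑ |X_i|` does not depend on `m`, the product tends to `0` in probability
under `P_X × P_w`.
-/

open Finset Function Topology

section WeightedVariance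

variable {ι : Type*} [Fintype ι]

noncomputable def weightedVar (p a : ι → ℝ) : ℝ :=
  ∑ i, p i * (a i - ∑ j, p j * a j) ^ 2

theorem weightedVar_eq_sub_sq (p a : ι → ℝ) (hp : ∑ i, p i = 1) :
    weightedVar p a = ∑ i, p i * a i ^ 2 - (∑ i, p i * a i) ^ 2 := by
  have hexpand : ∀ i, p i * (a i - ∑ j, p j * a j) ^ 2
      = p i * a i ^ 2 - 2 * (∑ j, p j * a j) * (p i * a i) + (∑ j, p j * a j) ^ 2 * p i :=
    fun i => by ring
  rw [weightedVar, sum_congr rfl fun i _ => hexpand i]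
  simp only [sum_add_distrib, sum_sub_distrib, ← mul_sum, hp]
  ring

theorem abs_sum_mul_le {c : ι → ℝ} {b : ℝ} (hc : ∀ i, |c i| ≤ b) (a : ι → ℝ) :
    |∑ i, c i * a i| ≤ b * ∑ i, |a i| := by
  rw [mul_sum]
  refine (abs_sum_le_sum_abs _ _).trans (sum_le_sum fun i _ => ?_)
  rw [abs_mul]
  exact mul_le_mul_of_nonneg_right (hc i) (abs_nonneg _)

theorem abs_le_one_of_sum_eq_one {p : ι → ℝ} (hp0 : ∀ i, 0 ≤ p i) (hp : ∑ i, p i = 1) (i : ι) :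
    |p i| ≤ 1 := by
  rw [abs_of_nonneg (hp0 i), ← hp]
  exact single_le_sum (fun j _ => hp0 j) (mem_univ i)

theorem abs_weightedVar_sub_le {p q : ι → ℝ} (hp0 : ∀ i, 0 ≤ p i) (hp : ∑ i, p i = 1)
    (hq0 : ∀ i, 0 ≤ q i) (hq : ∑ i, q i = 1) {δ : ℝ} (hδ : ∀ i, |p i - q i| ≤ δ) (a : ι → ℝ) :
    |weightedVar p a - weightedVar q a| ≤ 3 * δ * (∑ i, |a i|) ^ 2 := by
  set A := ∑ i, |a i|
  have hδ0 : 0 ≤ δ := by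
    obtain ⟨i, -, -⟩ := exists_ne_zero_of_sum_ne_zero (hp ▸ one_ne_zero : ∑ i, p i ≠ 0)
    exact (abs_nonneg _).trans (hδ i)
  have hsq : |∑ i, p i * a i ^ 2 - ∑ i, q i * a i ^ 2| ≤ δ * A ^ 2 := by
    rw [← sum_sub_distrib]
    simp_rw [← sub_mul]
    refine (abs_sum_mul_le hδ _).trans (mul_le_mul_of_nonneg_left ?_ hδ0)
    simp_rw [abs_pow]
    exact sum_sq_le_sq_sum_of_nonneg fun i _ => abs_nonneg _
  have hmean : |∑ i, p i * a i - ∑ i, q i * a i| ≤ δ * A := by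
    rw [← sum_sub_distrib]
    simp_rw [← sub_mul]
    exact abs_sum_mul_le hδ _
  have hmean_add : |∑ i, p i * a i + ∑ i, q i * a i| ≤ 2 * A := by
    have hp1 := abs_sum_mul_le (abs_le_one_of_sum_eq_one hp0 hp) a
    have hq1 := abs_sum_mul_le (abs_le_one_of_sum_eq_one hq0 hq) a
    linarith [abs_add_le (∑ i, p i * a i) (∑ i, q i * a i)]
  rw [weightedVar_eq_sub_sq p a hp, weightedVar_eq_sub_sq q a hq]
  calc _ = |(∑ i, p i * a i ^ 2 - ∑ i, q i * a i ^ 2)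
          - (∑ i, p i * a i - ∑ i, q i * a i) * (∑ i, p i * a i + ∑ i, q i * a i)| := by ring_nf
    _ ≤ δ * A ^ 2 + δ * A * (2 * A) := by
      refine (abs_sub _ _).trans (add_le_add hsq ?_)
      rw [abs_mul]
      exact mul_le_mul hmean hmean_add (abs_nonneg _) (by positivity)
    _ = 3 * δ * A ^ 2 := by ring

end WeightedVariance

theorem randVar_eq_weightedVar {Ωx : Type} (X : ℕ → Ωx → ℝ) (n m : ℕ) (k : Fin n → ℕ) (x : Ωx) :
    randVar X n m k x = weightedVar (fun i => (k i : ℝ) / m) (fun i => X i x) := by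
  have hmean : randMean X n m k x = ∑ j, (k j : ℝ) / m * X j x := by
    simp only [randMean, sum_div, div_mul_eq_mul_div]
  rw [weightedVar, ← hmean, randVar, sum_div]
  exact sum_congr rfl fun i _ => by ring

theorem sampleVar_eq_weightedVar {Ωx : Type} (X : ℕ → Ωx → ℝ) (n : ℕ) (x : Ωx) :
    sampleVar X n x = weightedVar (fun _ => 1 / (n : ℝ)) (fun i : Fin n => X i x) := by
  have hmean : sampleMean X n x = ∑ j : Fin n, 1 / (n : ℝ) * X j x := by
    simp only [sampleMean, sum_div, one_div_mul_eq_div]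
  rw [weightedVar, ← hmean, sampleVar, sum_div]
  exact sum_congr rfl fun i _ => by ring

theorem abs_randVar_sub_sampleVar_le {Ωx : Type} (X : ℕ → Ωx → ℝ) {n m : ℕ} (hn : n ≠ 0)
    (hm : m ≠ 0) {k : Fin n → ℕ} (hk : ∑ i, k i = m) (x : Ωx) :
    |randVar X n m k x - sampleVar X n x| ≤ 3 * (∑ i : Fin n, |X i x|) ^ 2 * weightNorm n m k := by
  rw [randVar_eq_weightedVar, sampleVar_eq_weightedVar, mul_right_comm]
  refine abs_weightedVar_sub_le (fun i => by positivity) ?_ (fun i => by positivity) ?_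
    (fun i => Real.abs_le_sqrt ?_) _
  · rw [← sum_div, ← Nat.cast_sum, hk, div_self (Nat.cast_ne_zero.2 hm)]
  · simp [hn]
  · exact single_le_sum (f := fun j => ((k j : ℝ) / m - 1 / n) ^ 2) (fun _ _ => sq_nonneg _)
      (mem_univ i)

section UnifMultinomial

theorem sum_update_add_apply {ι M : Type*} [Fintype ι] [DecidableEq ι] [AddCommMonoid M]
    (f : ι → M) (i : ι) (v : M) : ∑ j, update f i v j + f i = ∑ j, f j + v := by
  rw [← add_sum_erase _ _ (mem_univ i), ← add_sum_erase _ _ (mem_univ i), update_self,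
    sum_congr rfl fun j hj => update_of_ne (ne_of_mem_erase hj) v f]
  abel

variable {n : ℕ}

noncomputable def unifMultinomialProb (n m : ℕ) (k : Fin n → ℕ) : ℝ :=
  (Nat.factorial m : ℝ) / (∏ i, (Nat.factorial (k i) : ℝ)) * (1 / n) ^ m

noncomputable def unifMultinomialExpect (n m : ℕ) (g : (Fin n → ℕ) → ℝ) : ℝ :=
  ∑ k ∈ Nat.antidiagonalTuple n m, unifMultinomialProb n m k * g k

theorem unifMultinomialProb_nonneg (m : ℕ) (k : Fin n → ℕ) : 0 ≤ unifMultinomialProb n m k := by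
  unfold unifMultinomialProb
  positivity

theorem unifMultinomialProb_update_succ_mul (s : ℕ) (k : Fin n → ℕ) (i : Fin n) :
    unifMultinomialProb n (s + 1) (update k i (k i + 1)) * ((k i : ℝ) + 1)
      = (s + 1) / n * unifMultinomialProb n s k := by
  have hn : (n : ℝ) ≠ 0 := Nat.cast_ne_zero.2 (Fin.pos i).ne'
  set P := ∏ j ∈ univ.erase i, (Nat.factorial (k j) : ℝ)
  have hupdate : ∏ j, (Nat.factorial (update k i (k i + 1) j) : ℝ)
      = (Nat.factorial (k i + 1) : ℝ) * P := by
    rw [← mul_prod_erase _ _ (mem_univ i), update_self]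
    exact congrArg _ (prod_congr rfl fun j hj => by rw [update_of_ne (ne_of_mem_erase hj)])
  have hk : ∏ j, (Nat.factorial (k j) : ℝ) = (Nat.factorial (k i) : ℝ) * P :=
    (mul_prod_erase _ _ (mem_univ i)).symm
  rw [unifMultinomialProb, unifMultinomialProb, hupdate, hk, Nat.factorial_succ,
    Nat.factorial_succ, pow_succ]
  push_cast
  field_simp

theorem unifMultinomialExpect_add (m : ℕ) (g h : (Fin n → ℕ) → ℝ) :
    unifMultinomialExpect n m (fun k => g k + h k)
      = unifMultinomialExpect n m g + unifMultinomialExpect n m h := by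
  simp only [unifMultinomialExpect, mul_add, sum_add_distrib]

theorem unifMultinomialExpect_const_mul (m : ℕ) (c : ℝ) (g : (Fin n → ℕ) → ℝ) :
    unifMultinomialExpect n m (fun k => c * g k) = c * unifMultinomialExpect n m g := by
  simp only [unifMultinomialExpect, mul_sum, mul_left_comm]

theorem unifMultinomialExpect_sum {ι : Type*} (s : Finset ι) (m : ℕ)
    (g : ι → (Fin n → ℕ) → ℝ) :
    unifMultinomialExpect n m (fun k => ∑ i ∈ s, g i k)
      = ∑ i ∈ s, unifMultinomialExpect n m (g i) := by
  simp only [unifMultinomialExpect, mul_sum]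
  exact sum_comm

theorem unifMultinomialExpect_mono (m : ℕ) {g h : (Fin n → ℕ) → ℝ} (hgh : ∀ k, g k ≤ h k) :
    unifMultinomialExpect n m g ≤ unifMultinomialExpect n m h :=
  sum_le_sum fun k _ => mul_le_mul_of_nonneg_left (hgh k) (unifMultinomialProb_nonneg m k)

theorem unifMultinomialExpect_zero (g : (Fin n → ℕ) → ℝ) :
    unifMultinomialExpect n 0 g = g 0 := by
  simp [unifMultinomialExpect, unifMultinomialProb, Nat.antidiagonalTuple_zero_right]

/-- Size-biasing by the count of cell `i`: a multinomial of size `s + 1` weighted by `k i` is a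
multinomial of size `s` with one ball added to cell `i`. -/
theorem unifMultinomialExpect_succ_apply_mul (s : ℕ) (i : Fin n) (g : (Fin n → ℕ) → ℝ) :
    unifMultinomialExpect n (s + 1) (fun k => k i * g k)
      = (s + 1) / n * unifMultinomialExpect n s (fun k => g (update k i (k i + 1))) := by
  have hval : ∀ k : Fin n → ℕ,
      (s + 1) / n * (unifMultinomialProb n s k * g (update k i (k i + 1)))
        = unifMultinomialProb n (s + 1) (update k i (k i + 1))
          * ((update k i (k i + 1) i : ℕ) * g (update k i (k i + 1))) := by
    intro k
    rw [update_self, ← mul_assoc, ← unifMultinomialProb_update_succ_mul]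
    push_cast
    ring
  rw [unifMultinomialExpect, unifMultinomialExpect, mul_sum]
  symm
  refine sum_bij_ne_zero (fun k _ _ => update k i (k i + 1)) ?_ ?_ ?_ fun k _ _ => hval k
  · intro k hk _
    rw [Nat.mem_antidiagonalTuple] at hk ⊢
    have := sum_update_add_apply k i (k i + 1)
    omega
  · intro a _ _ b _ _ hab
    funext j
    have hj := congrFun hab j
    rcases eq_or_ne j i with rfl | hji
    · simpa using hj
    · simpa [hji] using hj
  · intro b hb hne
    have hbi : b i ≠ 0 := fun h => hne (by simp [h])
    have hupdate : update (update b i (b i - 1)) i (update b i (b i - 1) i + 1) = b := by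
      simp [Nat.sub_add_cancel (Nat.one_le_iff_ne_zero.2 hbi)]
    refine ⟨update b i (b i - 1), ?_, by rwa [hval, hupdate], hupdate⟩
    rw [Nat.mem_antidiagonalTuple] at hb ⊢
    have := sum_update_add_apply b i (b i - 1)
    omega

theorem unifMultinomialExpect_one (hn : n ≠ 0) (s : ℕ) :
    unifMultinomialExpect n s (fun _ => 1) = 1 := by
  induction s with
  | zero => exact unifMultinomialExpect_zero _
  | succ s ih =>
    have hcount : ∑ i : Fin n, unifMultinomialExpect n (s + 1) (fun k => k i * 1)
        = (s + 1) * unifMultinomialExpect n (s + 1) (fun _ => 1) := by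
      rw [← unifMultinomialExpect_sum, ← unifMultinomialExpect_const_mul]
      refine sum_congr rfl fun k hk => ?_
      simp only [mul_one, ← Nat.cast_sum, Nat.mem_antidiagonalTuple.1 hk]
      push_cast
      ring
    simp only [unifMultinomialExpect_succ_apply_mul, ih, sum_const, card_univ,
      Fintype.card_fin, nsmul_eq_mul] at hcount
    rw [mul_one, mul_div_cancel₀ _ (Nat.cast_ne_zero.2 hn)] at hcount
    exact mul_left_cancel₀ (Nat.cast_add_one_ne_zero s) (hcount.symm.trans (mul_one _).symm)

theorem unifMultinomialExpect_apply (hn : n ≠ 0) (s : ℕ) (i : Fin n) :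
    unifMultinomialExpect n s (fun k => (k i : ℝ)) = s / n := by
  cases s with
  | zero => simp [unifMultinomialExpect_zero]
  | succ s =>
    have h := unifMultinomialExpect_succ_apply_mul s i (fun _ => 1)
    simp only [mul_one, unifMultinomialExpect_one hn] at h
    rw [h]
    push_cast
    ring

theorem unifMultinomialExpect_apply_mul_sub_one (hn : n ≠ 0) (s : ℕ) (i : Fin n) :
    unifMultinomialExpect n s (fun k => (k i : ℝ) * (k i - 1)) = s * (s - 1) / n ^ 2 := by
  cases s with
  | zero => simp [unifMultinomialExpect_zero]
  | succ s =>
    rw [unifMultinomialExpect_succ_apply_mul s i (fun k => (k i : ℝ) - 1)]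
    simp only [update_self, Nat.cast_add, Nat.cast_one, add_sub_cancel_right,
      unifMultinomialExpect_apply hn]
    ring

theorem unifMultinomialExpect_sq_sub (hn : n ≠ 0) (s : ℕ) (i : Fin n) :
    unifMultinomialExpect n s (fun k => ((k i : ℝ) - s / n) ^ 2) = s * (n - 1) / n ^ 2 := by
  have hn' : (n : ℝ) ≠ 0 := Nat.cast_ne_zero.2 hn
  calc unifMultinomialExpect n s (fun k => ((k i : ℝ) - s / n) ^ 2)
      = unifMultinomialExpect n s (fun k => (k i : ℝ) * (k i - 1))
        + (1 - 2 * s / n) * unifMultinomialExpect n s (fun k => (k i : ℝ))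
        + (s / n) ^ 2 * unifMultinomialExpect n s (fun _ => 1) := by
        rw [← unifMultinomialExpect_const_mul, ← unifMultinomialExpect_const_mul,
          ← unifMultinomialExpect_add, ← unifMultinomialExpect_add]
        congr 1
        funext k
        ring
    _ = s * (n - 1) / n ^ 2 := by
      rw [unifMultinomialExpect_apply_mul_sub_one hn, unifMultinomialExpect_apply hn,
        unifMultinomialExpect_one hn]
      field_simp
      ring

theorem unifMultinomialExpect_weightNorm_sq (hn : n ≠ 0) {m : ℕ} (hm : m ≠ 0) :
    unifMultinomialExpect n m (fun k => weightNorm n m k ^ 2) = (n - 1) / (n * m) := by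
  have hn' : (n : ℝ) ≠ 0 := Nat.cast_ne_zero.2 hn
  have hm' : (m : ℝ) ≠ 0 := Nat.cast_ne_zero.2 hm
  calc unifMultinomialExpect n m (fun k => weightNorm n m k ^ 2)
      = unifMultinomialExpect n m (fun k => ∑ i, (1 / m ^ 2 : ℝ) * ((k i : ℝ) - m / n) ^ 2) := by
        congr 1
        funext k
        rw [weightNorm, Real.sq_sqrt (sum_nonneg fun _ _ => sq_nonneg _)]
        refine sum_congr rfl fun i _ => ?_
        field_simp
    _ = (n - 1) / (n * m) := by
      simp only [unifMultinomialExpect_sum, unifMultinomialExpect_const_mul,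
        unifMultinomialExpect_sq_sub hn, sum_const, card_univ, Fintype.card_fin, nsmul_eq_mul]
      field_simp

end UnifMultinomial

namespace IsUnifMultinomial

variable {Ωw : Type} [MeasurableSpace Ωw] {Pw : Measure Ωw} [IsFiniteMeasure Pw] {n m : ℕ}
  {w : Fin n → Ωw → ℕ}

theorem measureReal_preimage (hw : IsUnifMultinomial Pw n m w) (S : Set (Fin n → ℕ)) :
    Pw.real {ω | (fun i => w i ω) ∈ S} = unifMultinomialExpect n m (S.indicator 1) := by
  set W : Ωw → Fin n → ℕ := fun ω i => w i ω
  have hW : Measurable W := measurable_pi_lambda _ hw.1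
  have hS : MeasurableSet S := S.to_countable.measurableSet
  have hsingleton : ∀ k, (Pw.map W {k}).toReal
      = if k ∈ Nat.antidiagonalTuple n m then unifMultinomialProb n m k else 0 := by
    intro k
    have hpre : W ⁻¹' {k} = {ω | ∀ i, w i ω = k i} := by
      ext ω
      simp [W, funext_iff]
    rw [Measure.map_apply hW (measurableSet_singleton k), hpre, hw.2 k]
    exact if_congr Nat.mem_antidiagonalTuple.symm rfl rfl
  have hoff : ∀ k ∉ Nat.antidiagonalTuple n m, S.indicator (fun k => Pw.map W {k}) k = 0 := by
    intro k hk
    have h := hsingleton k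
    rw [if_neg hk, ENNReal.toReal_eq_zero_iff] at h
    simp [Set.indicator, h.resolve_right (measure_ne_top _ _)]
  rw [measureReal_def, show {ω | W ω ∈ S} = W ⁻¹' S from rfl, ← Measure.map_apply hW hS,
    ← Measure.tsum_indicator_apply_singleton _ S hS, tsum_eq_sum hoff,
    ENNReal.toReal_sum fun k _ => by simp only [Set.indicator]; split_ifs <;> simp]
  refine sum_congr rfl fun k hk => ?_
  by_cases hkS : k ∈ S <;> simp [hkS, hsingleton, hk]

theorem ae_sum_eq (hw : IsUnifMultinomial Pw n m w) : ∀ᵐ ω ∂Pw, ∑ i, w i ω = m := by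
  have hzero : unifMultinomialExpect n m ({k | ∑ i, k i ≠ m}.indicator 1) = 0 :=
    sum_eq_zero fun k hk => by simp [Nat.mem_antidiagonalTuple.1 hk]
  rw [ae_iff, ← measureReal_eq_zero_iff]
  exact (hw.measureReal_preimage _).trans hzero

end IsUnifMultinomial

theorem weightNorm_nonneg (n m : ℕ) (k : Fin n → ℕ) : 0 ≤ weightNorm n m k :=
  Real.sqrt_nonneg _

theorem tendstoInMeasure_weightNorm {Ωw : Type} [MeasurableSpace Ωw] {Pw : Measure Ωw}
    [IsFiniteMeasure Pw] {n : ℕ} (hn : n ≠ 0) {w : ℕ → Fin n → Ωw → ℕ}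
    (hw : ∀ m, IsUnifMultinomial Pw n m (w m)) :
    TendstoInMeasure Pw (fun m ω => weightNorm n m (fun i => w m i ω)) atTop 0 := by
  rw [tendstoInMeasure_iff_measureReal_dist]
  intro ε hε
  simp only [Pi.zero_apply]
  have hchebyshev : ∀ m ≠ 0, Pw.real {ω | ε ≤ dist (weightNorm n m (fun i => w m i ω)) 0}
      ≤ (n - 1) / (n * ε ^ 2) / m := by
    intro m hm
    have hindicator : ∀ k, {k | ε ≤ weightNorm n m k}.indicator 1 k
        ≤ (ε ^ 2)⁻¹ * weightNorm n m k ^ 2 := by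
      intro k
      by_cases hk : ε ≤ weightNorm n m k
      · rw [Set.indicator_of_mem (by exact hk), Pi.one_apply, le_inv_mul_iff₀ (by positivity),
          mul_one]
        exact pow_le_pow_left₀ hε.le hk 2
      · rw [Set.indicator_of_notMem (by exact hk)]
        positivity
    calc Pw.real {ω | ε ≤ dist (weightNorm n m (fun i => w m i ω)) 0}
        = Pw.real {ω | (fun i => w m i ω) ∈ {k | ε ≤ weightNorm n m k}} := by
          simp only [Real.dist_eq, sub_zero, abs_of_nonneg (weightNorm_nonneg _ _ _)]
          rfl
      _ = unifMultinomialExpect n m ({k | ε ≤ weightNorm n m k}.indicator 1) :=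
          (hw m).measureReal_preimage _
      _ ≤ unifMultinomialExpect n m (fun k => (ε ^ 2)⁻¹ * weightNorm n m k ^ 2) :=
          unifMultinomialExpect_mono m hindicator
      _ = (n - 1) / (n * ε ^ 2) / m := by
          rw [unifMultinomialExpect_const_mul, unifMultinomialExpect_weightNorm_sq hn hm]
          field_simp
  refine tendsto_of_tendsto_of_tendsto_of_le_of_le' tendsto_const_nhds
    (tendsto_const_div_atTop_nhds_zero_nat ((n - 1) / (n * ε ^ 2) : ℝ))
    (Eventually.of_forall fun m => measureReal_nonneg) ?_
  filter_upwards [eventually_ne_atTop 0] with m hm using hchebyshev m hm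

theorem tendsto_measure_setOf_lt_atTop {α : Type*} [MeasurableSpace α] {μ : Measure α}
    [IsFiniteMeasure μ] {A : α → ℝ} (hA : Measurable A) :
    Tendsto (fun M : ℝ => μ {x | M < A x}) atTop (𝓝 0) := by
  have hempty : ⋂ M : ℝ, {x | M < A x} = ∅ :=
    Set.eq_empty_of_forall_notMem fun x hx => lt_irrefl (A x) (Set.mem_iInter.1 hx (A x))
  have h := tendsto_measure_iInter_atTop (μ := μ)
    (fun M => (measurableSet_lt measurable_const hA).nullMeasurableSet)
    (fun M M' hMM' x (hx : M' < A x) => (show M < A x from hMM'.trans_lt hx))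
    ⟨0, measure_ne_top μ _⟩
  rwa [hempty, measure_empty] at h

theorem measure_prod_le_of_abs_sub_le {α β : Type*} [MeasurableSpace α] [MeasurableSpace β]
    {μ : Measure α} {ν : Measure β} [SFinite ν] {f g : α × β → ℝ} {A : α → ℝ} {D : β → ℝ}
    (hfg : ∀ᵐ y ∂ν, ∀ x, |f (x, y) - g (x, y)| ≤ A x * D y) (ε : ℝ) {M : ℝ} (hM : 0 < M) :
    (μ.prod ν) {p | ε ≤ dist (f p) (g p)}
      ≤ μ {x | M < |A x|} * ν Set.univ + μ Set.univ * ν {y | ε / M ≤ |D y|} := by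
  have hsub : {p | ε ≤ dist (f p) (g p)} ≤ᵐ[μ.prod ν]
      ({x | M < |A x|} ×ˢ Set.univ ∪ Set.univ ×ˢ {y | ε / M ≤ |D y|} : Set (α × β)) := by
    filter_upwards [Measure.quasiMeasurePreserving_snd.ae hfg] with p hp (hpε : ε ≤ dist _ _)
    by_cases hAp : M < |A p.1|
    · exact Or.inl ⟨hAp, trivial⟩
    refine Or.inr ⟨trivial, show ε / M ≤ |D p.2| from ?_⟩
    by_contra! hDp
    have hlt : |f p - g p| < ε := calc
      |f p - g p| ≤ |A p.1| * |D p.2| := (hp p.1).trans (abs_mul (A p.1) (D p.2) ▸ le_abs_self _)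
      _ ≤ M * |D p.2| := by gcongr; exact not_lt.1 hAp
      _ < M * (ε / M) := by gcongr
      _ = ε := by field_simp
    exact hpε.not_gt (Real.dist_eq _ _ ▸ hlt)
  refine (measure_mono_ae hsub).trans ((measure_union_le _ _).trans_eq ?_)
  rw [Measure.prod_prod, Measure.prod_prod]

theorem tendstoInMeasure_prod_of_abs_sub_le {ι α β : Type*} [MeasurableSpace α]
    [MeasurableSpace β] {μ : Measure α} {ν : Measure β} [IsFiniteMeasure μ] [IsFiniteMeasure ν]
    {l : Filter ι} {f : ι → α × β → ℝ} {g : α × β → ℝ} {A : α → ℝ} {D : ι → β → ℝ}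
    (hA : Measurable A) (hD : TendstoInMeasure ν D l 0)
    (hfg : ∀ᶠ i in l, ∀ᵐ y ∂ν, ∀ x, |f i (x, y) - g (x, y)| ≤ A x * D i y) :
    TendstoInMeasure (μ.prod ν) f l g := by
  rw [tendstoInMeasure_iff_dist] at hD ⊢
  simp only [Pi.zero_apply, Real.dist_eq, sub_zero] at hD
  intro ε hε
  rw [ENNReal.tendsto_nhds_zero]
  intro η hη
  have hη2 : 0 < η / 2 := ENNReal.half_pos hη.ne'
  have htail := ENNReal.Tendsto.mul_const (tendsto_measure_setOf_lt_atTop (μ := μ) hA.abs)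
    (Or.inr (measure_ne_top ν Set.univ))
  rw [zero_mul] at htail
  obtain ⟨M, hM, hMpos⟩ := ((ENNReal.tendsto_nhds_zero.1 htail _ hη2).and
    (eventually_gt_atTop 0)).exists
  have hsmall := ENNReal.Tendsto.const_mul (hD (ε / M) (by positivity))
    (Or.inr (measure_ne_top μ Set.univ))
  rw [mul_zero] at hsmall
  filter_upwards [hfg, ENNReal.tendsto_nhds_zero.1 hsmall _ hη2] with i hi hDi
  calc (μ.prod ν) {p | ε ≤ dist (f i p) (g p)}
      ≤ μ {x | M < |A x|} * ν Set.univ + μ Set.univ * ν {y | ε / M ≤ |D i y|} :=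
        measure_prod_le_of_abs_sub_le hi ε hMpos
    _ ≤ η / 2 + η / 2 := add_le_add hM hDi
    _ = η := ENNReal.add_halves η

theorem randVar_consistency_fixed_n_general
    {Ωx Ωw : Type} [MeasurableSpace Ωx] [MeasurableSpace Ωw]
    (Px : Measure Ωx) (Pw : Measure Ωw)
    [IsProbabilityMeasure Px] [IsProbabilityMeasure Pw]
    (X : ℕ → Ωx → ℝ)
    (hXmeas : ∀ i, Measurable (X i))
    (n : ℕ) (hn : 2 ≤ n)
    (w : ℕ → Fin n → Ωw → ℕ)
    (hw : ∀ m, IsUnifMultinomial Pw n m (w m))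
    :
    ∀ ε : ℝ, 0 < ε →
      Tendsto (fun m => ((Px.prod Pw) {p |
          |randVar X n m (fun i => w m i p.2) p.1 - sampleVar X n p.1| > ε}).toReal)
        atTop (nhds 0) := by
  intro ε hε
  have hn0 : n ≠ 0 := by omega
  have hA : Measurable fun x => 3 * (∑ i : Fin n, |X i x|) ^ 2 := by fun_prop
  have hconv : TendstoInMeasure (Px.prod Pw)
      (fun m p => randVar X n m (fun i => w m i p.2) p.1) atTop (fun p => sampleVar X n p.1) := by
    refine tendstoInMeasure_prod_of_abs_sub_le hA (tendstoInMeasure_weightNorm hn0 hw) ?_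
    filter_upwards [eventually_ne_atTop 0] with m hm
    filter_upwards [(hw m).ae_sum_eq] with ω hω x
    exact abs_randVar_sub_sampleVar_le X hn0 hm hω x
  rw [tendstoInMeasure_iff_measureReal_dist] at hconv
  exact tendsto_of_tendsto_of_tendsto_of_le_of_le tendsto_const_nhds (hconv ε hε)
    (fun m => ENNReal.toReal_nonneg) fun m => measureReal_mono fun p (hp : ε < _) => hp.le

theorem randVar_consistency_fixed_n
    {Ωx Ωw : Type} [MeasurableSpace Ωx] [MeasurableSpace Ωw]
    (Px : Measure Ωx) (Pw : Measure Ωw)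
    [IsProbabilityMeasure Px] [IsProbabilityMeasure Pw]
    (X : ℕ → Ωx → ℝ)
    (hXmeas : ∀ i, Measurable (X i))
    (hXindep : iIndepFun X Px)
    (hXid : ∀ i, IdentDistrib (X i) (X 0) Px Px)
    (μ σ2 : ℝ)
    (hXint : Integrable (X 0) Px)
    (hμ : μ = ∫ ω, X 0 ω ∂Px)
    (hVarInt : Integrable (fun ω => (X 0 ω - μ) ^ 2) Px)
    (hσ2 : σ2 = ∫ ω, (X 0 ω - μ) ^ 2 ∂Px)
    (hσ2pos : 0 < σ2)
    (n : ℕ) (hn : 2 ≤ n)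
    (w : ℕ → Fin n → Ωw → ℕ)
    (hw : ∀ m, IsUnifMultinomial Pw n m (w m))
    :
    ∀ ε : ℝ, 0 < ε →
      Tendsto (fun m => ((Px.prod Pw) {p |
          |randVar X n m (fun i => w m i p.2) p.1 - sampleVar X n p.1| > ε}).toReal)
        atTop (nhds 0) :=
  randVar_consistency_fixed_n_general Px Pw X hXmeas n hn w hw
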